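/- Code normal factor graph duality theorem (Forney's normal graph duality theorem in NFG form): Let G = (V, E_int, E_ext, f_V) be an NFG in which every edge alphabet X_e is a finite abelian group and every local function f_v is the indicator function of a subgroup C_v ≤ ∏_{e∈E(v)} X_e. Let B ≤ (∏_{e∈E_ext} X_e) × (∏_{e∈E_int} X_e) be the global behavior, i.e., the subgroup of all configurations (x_{E_ext}, x_{E_int}) satisfying all local constraints, let C ≤ ∏_{e∈E_ext} X_e be its projection onto the external coordinates (the realized code), and let σ := |{x_{E_int} : (0, x_{E_int}) ∈ B}|, so that Z_G = σ · 1_C. Then the dual NFG Ĝ (obtained by replacing each f_v by its Fourier transform and inserting a δ_+ vertex into each internal edge) satisfies Z_Ĝ = |X_{E_int}| · σ · |C| · 1_{C^⊥}, where C^⊥ := {x̂ ∈ ∏_{e∈E_ext} X_e^∧ : ∏_{e∈E_ext} x̂_e(c_e) = 1 for all c ∈ C} is the dual code. In particular, the dual NFG realizes, up to a positive scale factor, the indicator function of the dual code. -/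

import Mathlib

open scoped BigOperators Classical

/-! # Normal factor graphs -/

/-- `Inc ends extEnd v e` means edge `e` is incident to vertex `v`. -/
def Inc {V Ei Ee : Type} (ends : Ei → V × V) (extEnd : Ee → V) (v : V) :
    Ei ⊕ Ee → Prop
  | .inl i => (ends i).1 = v ∨ (ends i).2 = v
  | .inr j => extEnd j = v

/-- Combine an internal and an external configuration into a configuration on all edges. -/
def combine {Ei Ee : Type} {X : Ei ⊕ Ee → Type}
    (xi : ∀ i : Ei, X (.inl i)) (xe : ∀ j : Ee, X (.inr j)) : ∀ e, X e
  | .inl i => xi i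
  | .inr j => xe j

/-- The exterior function realized by a normal factor graph. -/
noncomputable def Zfun {V Ei Ee : Type} [Fintype V] [Fintype Ei]
    (X : Ei ⊕ Ee → Type) [∀ e, Fintype (X e)]
    (ends : Ei → V × V) (extEnd : Ee → V)
    (f : ∀ v : V, ((e : {e : Ei ⊕ Ee // Inc ends extEnd v e}) → X e.1) → ℂ)
    (xe : ∀ j : Ee, X (.inr j)) : ℂ :=
  ∑ xi : ∀ i : Ei, X (.inl i), ∏ v : V, f v fun e => combine xi xe e.1

/-! ## The dual NFG

The dual NFG `Ĝ` of `G` has vertices `V ⊕ Ei` (one new `δ₊` vertex in the middle of each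
internal edge), internal edges `Ei ⊕ Ei` (the two halves of each original internal edge),
and external edges `Ee`.  Each (half-)edge coming from an edge `e` of `G` carries the
character group `(X e)^∧ = AddChar (X e) ℂ`; each original vertex carries the Fourier
transform of its local function, and each new vertex carries `δ₊`. -/

section DualNFG

variable {V Ei Ee : Type} (X : Ei ⊕ Ee → Type) [∀ e, AddCommGroup (X e)]
  (ends : Ei → V × V) (extEnd : Ee → V)

/-- Edge alphabets of the dual NFG: character groups. -/
@[reducible] def Xhat : (Ei ⊕ Ei) ⊕ Ee → Type
  | .inl (.inl i) => AddChar (X (.inl i)) ℂ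
  | .inl (.inr i) => AddChar (X (.inl i)) ℂ
  | .inr j => AddChar (X (.inr j)) ℂ

noncomputable instance XhatFintype [∀ e, Fintype (X e)] : ∀ e, Fintype (Xhat X e)
  | .inl (.inl i) => inferInstanceAs (Fintype (AddChar (X (.inl i)) ℂ))
  | .inl (.inr i) => inferInstanceAs (Fintype (AddChar (X (.inl i)) ℂ))
  | .inr j => inferInstanceAs (Fintype (AddChar (X (.inr j)) ℂ))

/-- Endpoints of the internal edges of the dual NFG: `.inl i` is the half of `i` from
`(ends i).1` to the new vertex `i`, and `.inr i` the half from the new vertex `i`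
to `(ends i).2`. -/
def dEnds : Ei ⊕ Ei → (V ⊕ Ei) × (V ⊕ Ei)
  | .inl i => (.inl (ends i).1, .inr i)
  | .inr i => (.inr i, .inl (ends i).2)

/-- Attachment of the external edges of the dual NFG. -/
def dExtEnd : Ee → V ⊕ Ei := fun j => .inl (extEnd j)

/-- The character attached by a dual configuration `ψ` at vertex `v` to an original edge
slot `e` incident to `v`. -/
noncomputable def charAt (v : V)
    (ψ : (e' : {e' : (Ei ⊕ Ei) ⊕ Ee //
        Inc (dEnds ends) (dExtEnd extEnd) (.inl v) e'}) → Xhat X e'.1) :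
    (e : {e : Ei ⊕ Ee // Inc ends extEnd v e}) → AddChar (X e.1) ℂ :=
  fun e =>
    match e with
    | ⟨.inl i, h⟩ =>
        if h1 : (ends i).1 = v then
          ψ ⟨.inl (.inl i), Or.inl (congrArg (Sum.inl : V → V ⊕ Ei) h1)⟩
        else
          ψ ⟨.inl (.inr i), Or.inr (congrArg (Sum.inl : V → V ⊕ Ei)
              (h.resolve_left h1))⟩
    | ⟨.inr j, h⟩ => ψ ⟨.inr j, congrArg (Sum.inl : V → V ⊕ Ei) h⟩

/-- Local functions of the dual NFG: each original vertex `v` carries the Fourier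
transform `F[f v]` of its local function, and each new vertex (one per original internal
edge) carries `δ₊`, the indicator that the two adjacent characters sum to zero (written
multiplicatively: their product is the trivial character). -/
noncomputable def dualF [Fintype Ei] [Fintype Ee] [∀ e, Fintype (X e)]
    (f : ∀ v : V, ((e : {e : Ei ⊕ Ee // Inc ends extEnd v e}) → X e.1) → ℂ) :
    ∀ w : V ⊕ Ei,
      ((e' : {e' : (Ei ⊕ Ei) ⊕ Ee //
          Inc (dEnds ends) (dExtEnd extEnd) w e'}) → Xhat X e'.1) → ℂ
  | .inl v => fun ψ =>
      ∑ xv : (e : {e : Ei ⊕ Ee // Inc ends extEnd v e}) → X e.1,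
        f v xv * ∏ e : {e : Ei ⊕ Ee // Inc ends extEnd v e},
          (charAt X ends extEnd v ψ e) (xv e)
  | .inr i => fun ψ =>
      if (ψ ⟨.inl (.inl i), Or.inr rfl⟩) * (ψ ⟨.inl (.inr i), Or.inl rfl⟩) = 1
      then 1 else 0

end DualNFG

/-! Expanding each Fourier transform of `Ĝ`, its exterior function becomes a sum over families
`x` of local configurations of `G` and over characters on the halves of the internal edges. The
`δ₊` vertices force the two halves of an internal edge `i` to carry `χ i` and `(χ i)⁻¹`, so
the sum over `χ` is `∑ χ, ∏ i, χ i (x_i - x_i')`, where `x_i, x_i'` are the values that the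
local configurations at the two ends of `i` put on it. By orthogonality of characters this is
`|X_{E_int}|` times the indicator that the local configurations agree along every internal
edge. Consistent families are exactly the global configurations, hence
`Z_Ĝ = |X_{E_int}| · F[Z_G]` for arbitrary local functions. For a code NFG, `Z_G = σ · 1_C`
since the fibres of `B` over `C` are translates of its fibre over `0`, and the Fourier transform
of `1_C` is `|C| · 1_{C^⊥}`. -/

open Finset

namespace AddChar

def pi {ι : Type*} [Fintype ι] {Y : ι → Type*} [∀ j, AddMonoid (Y j)] {M : Type*}
    [CommMonoid M] (ψ : ∀ j, AddChar (Y j) M) : AddChar (∀ j, Y j) M where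
  toFun y := ∏ j, ψ j (y j)
  map_zero_eq_one' := by simp
  map_add_eq_mul' a b := by simp [map_add_eq_mul, prod_mul_distrib]

@[simp]
lemma pi_apply {ι : Type*} [Fintype ι] {Y : ι → Type*} [∀ j, AddMonoid (Y j)] {M : Type*}
    [CommMonoid M] (ψ : ∀ j, AddChar (Y j) M) (y : ∀ j, Y j) : pi ψ y = ∏ j, ψ j (y j) :=
  rfl

lemma sum_ite_mem_eq_ite {G R : Type*} [AddGroup G] [Fintype G] [CommSemiring R] [IsDomain R]
    (ψ : AddChar G R) (H : AddSubgroup G) :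
    (∑ g, if g ∈ H then ψ g else 0)
      = if ∀ h ∈ H, ψ h = 1 then (Nat.card H : R) else 0 := by
  rw [← sum_filter, sum_subtype (p := (· ∈ H)) _ (by simp), Nat.card_eq_fintype_card]
  have hzero : ψ.compAddMonoidHom H.subtype = 0 ↔ ∀ h ∈ H, ψ h = 1 := by
    rw [eq_zero_iff]
    simp
  exact (ψ.compAddMonoidHom H.subtype).sum_eq_ite.trans (if_congr hzero rfl rfl)

lemma sum_pi_prod_apply_eq_ite {ι : Type*} [Fintype ι] {A : ι → Type*}
    [∀ i, AddCommGroup (A i)] [∀ i, Fintype (A i)] (d : ∀ i, A i) :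
    ∑ χ : ∀ i, AddChar (A i) ℂ, ∏ i, χ i (d i)
      = if d = 0 then ∏ i, (Fintype.card (A i) : ℂ) else 0 := by
  rw [← Fintype.piFinset_univ,
    ← prod_univ_sum (fun _ => univ) fun i (χ : AddChar (A i) ℂ) => χ (d i)]
  simp_rw [sum_apply_eq_ite, Fintype.prod_ite_zero, funext_iff, Pi.zero_apply]

end AddChar

lemma AddSubgroup.card_fiber_eq_card_fiber_zero {P Q : Type*} [AddGroup P] [AddGroup Q]
    (B : AddSubgroup (P × Q)) {p : P} {q₀ : Q} (h : (p, q₀) ∈ B) :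
    Nat.card {q // (p, q) ∈ B} = Nat.card {q // ((0 : P), q) ∈ B} :=
  Nat.card_congr <| (Equiv.subRight q₀).subtypeEquiv fun q => by
    rw [iff_comm, ← B.add_mem_cancel_right h]
    simp

section LocalConfigurations

abbrev LocalConfig {V Ei Ee : Type} (X : Ei ⊕ Ee → Type) (ends : Ei → V × V)
    (extEnd : Ee → V) (v : V) : Type :=
  (e : {e : Ei ⊕ Ee // Inc ends extEnd v e}) → X e.1

variable {V Ei Ee : Type} {X : Ei ⊕ Ee → Type} (ends : Ei → V × V) (extEnd : Ee → V)

def localRestrict (xi : ∀ i, X (.inl i)) (xe : ∀ j, X (.inr j)) (v : V) :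
    LocalConfig X ends extEnd v :=
  fun e => combine xi xe e.1

def IsConsistent (x : ∀ v, LocalConfig X ends extEnd v) : Prop :=
  ∀ i, x (ends i).1 ⟨.inl i, Or.inl rfl⟩ = x (ends i).2 ⟨.inl i, Or.inr rfl⟩

def consistentEquiv :
    {x : ∀ v, LocalConfig X ends extEnd v // IsConsistent ends extEnd x}
      ≃ (∀ j, X (.inr j)) × (∀ i, X (.inl i)) where
  toFun x :=
    (fun j => x.1 (extEnd j) ⟨.inr j, rfl⟩, fun i => x.1 (ends i).1 ⟨.inl i, Or.inl rfl⟩)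
  invFun p := ⟨localRestrict ends extEnd p.2 p.1, fun _ => rfl⟩
  left_inv := by
    rintro ⟨x, hx⟩
    ext v ⟨i | j, h⟩
    · rcases h with rfl | rfl
      exacts [rfl, hx i]
    · subst h
      rfl
  right_inv _ := rfl

lemma sum_ite_isConsistent [Fintype V] [Fintype Ei] [Fintype Ee] [∀ e, Fintype (X e)]
    {M : Type*} [AddCommMonoid M] (G : (∀ v, LocalConfig X ends extEnd v) → M) :
    (∑ x, if IsConsistent ends extEnd x then G x else 0)
      = ∑ xe, ∑ xi, G (localRestrict ends extEnd xi xe) := by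
  rw [← sum_filter, sum_subtype (p := IsConsistent ends extEnd) _ (by simp),
    ← Fintype.sum_prod_type']
  exact (Fintype.sum_equiv (consistentEquiv ends extEnd).symm _ _ fun _ => rfl).symm

end LocalConfigurations

lemma Zfun_eq_card_mul_ite {V Ei Ee : Type} [Fintype V] [Fintype Ei] {X : Ei ⊕ Ee → Type}
    [∀ e, AddCommGroup (X e)] [∀ e, Fintype (X e)] {ends : Ei → V × V} {extEnd : Ee → V}
    {f : ∀ v, LocalConfig X ends extEnd v → ℂ}
    {C : ∀ v, AddSubgroup (LocalConfig X ends extEnd v)}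
    (hf : ∀ v x, f v x = if x ∈ C v then 1 else 0)
    {B : AddSubgroup ((∀ j, X (.inr j)) × (∀ i, X (.inl i)))}
    (hB : ∀ p : (∀ j, X (.inr j)) × (∀ i, X (.inl i)),
      p ∈ B ↔ ∀ v, localRestrict ends extEnd p.2 p.1 v ∈ C v)
    {Ccode : AddSubgroup (∀ j, X (.inr j))}
    (hCcode : ∀ xe, xe ∈ Ccode ↔ ∃ xi, (xe, xi) ∈ B) (xe : ∀ j, X (.inr j)) :
    Zfun X ends extEnd f xe
      = Nat.card {xi // ((0, xi) : (∀ j, X (.inr j)) × (∀ i, X (.inl i))) ∈ B}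
          * if xe ∈ Ccode then 1 else 0 := by
  have hprod : ∀ xi, ∏ v, f v (localRestrict ends extEnd xi xe v)
      = if (xe, xi) ∈ B then 1 else 0 := fun xi => by
    simp_rw [hf, Fintype.prod_boole]
    exact if_congr (hB (xe, xi)).symm rfl rfl
  change ∑ xi, ∏ v, f v (localRestrict ends extEnd xi xe v) = _
  rw [Fintype.sum_congr _ _ hprod, sum_boole, ← Fintype.card_subtype,
    ← Nat.card_eq_fintype_card]
  by_cases h : xe ∈ Ccode
  · obtain ⟨xi₀, h₀⟩ := (hCcode xe).1 h
    rw [if_pos h, mul_one, B.card_fiber_eq_card_fiber_zero h₀]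
  · have hfiber : ∀ xi, (xe, xi) ∉ B := fun xi hxi => h ((hCcode xe).2 ⟨xi, hxi⟩)
    simp [h, hfiber]

section DualNFG

variable {V Ei Ee : Type} (ends : Ei → V × V) (extEnd : Ee → V)

/-- The half-edges `(v, e)` of `G` are the edges of `Ĝ`; this needs `G` to have no loops. -/
noncomputable def incidenceEquiv (hne : ∀ i, (ends i).1 ≠ (ends i).2) :
    (Ei ⊕ Ei) ⊕ Ee ≃ Σ v : V, {e : Ei ⊕ Ee // Inc ends extEnd v e} where
  toFun
    | .inl (.inl i) => ⟨(ends i).1, ⟨.inl i, Or.inl rfl⟩⟩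
    | .inl (.inr i) => ⟨(ends i).2, ⟨.inl i, Or.inr rfl⟩⟩
    | .inr j => ⟨extEnd j, ⟨.inr j, rfl⟩⟩
  invFun
    | ⟨v, ⟨.inl i, _⟩⟩ => if (ends i).1 = v then .inl (.inl i) else .inl (.inr i)
    | ⟨_, ⟨.inr j, _⟩⟩ => .inr j
  left_inv := by
    rintro ((i | i) | j)
    · simp
    · simp [hne i]
    · rfl
  right_inv := by
    rintro ⟨v, ⟨i | j, h⟩⟩
    · by_cases h₁ : (ends i).1 = v
      · subst h₁
        simp
      · obtain rfl : (ends i).2 = v := h.resolve_left h₁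
        simp [h₁]
    · subst h
      rfl

lemma prod_prod_incident [Fintype V] [Fintype Ei] [Fintype Ee] {M : Type*} [CommMonoid M]
    (hne : ∀ i, (ends i).1 ≠ (ends i).2)
    (F : ∀ v, {e : Ei ⊕ Ee // Inc ends extEnd v e} → M) :
    ∏ v, ∏ e, F v e
      = (∏ i, F (ends i).1 ⟨.inl i, Or.inl rfl⟩ * F (ends i).2 ⟨.inl i, Or.inr rfl⟩)
        * ∏ j, F (extEnd j) ⟨.inr j, rfl⟩ := by
  have hsigma : ∏ p : Σ v, {e : Ei ⊕ Ee // Inc ends extEnd v e}, F p.1 p.2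
      = ∏ v, ∏ e, F v e := by
    rw [← univ_sigma_univ, prod_sigma]
  rw [← hsigma, ← (incidenceEquiv ends extEnd hne).prod_comp,
    Fintype.prod_sum_type, Fintype.prod_sum_type, prod_mul_distrib]
  rfl

variable {X : Ei ⊕ Ee → Type} [∀ e, AddCommGroup (X e)]

/-- The internal configurations of `Ĝ` on which all the `δ₊` vertices are nonzero. -/
def halfEdgeChars (χ : ∀ i, AddChar (X (.inl i)) ℂ) : ∀ k : Ei ⊕ Ei, Xhat X (.inl k) :=
  (Equiv.sumPiEquivProdPi fun k => Xhat X (.inl k)).symm (χ, fun i => (χ i)⁻¹)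

lemma Zfun_dual_eq_sum_halfEdgeChars [Fintype V] [Fintype Ei] [Fintype Ee]
    [∀ e, Fintype (X e)] (f : ∀ v, LocalConfig X ends extEnd v → ℂ)
    (ψe : ∀ j, AddChar (X (.inr j)) ℂ) :
    Zfun (Xhat X) (dEnds ends) (dExtEnd extEnd) (dualF X ends extEnd f) ψe
      = ∑ χ : ∀ i, AddChar (X (.inl i)) ℂ, ∏ v,
          dualF X ends extEnd f (.inl v) fun e => combine (halfEdgeChars χ) ψe e.1 := by
  let e := (Equiv.sumPiEquivProdPi fun k => Xhat X (.inl k)).symm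
  let g := fun ξ : ∀ k, Xhat X (.inl k) =>
    ∏ w, dualF X ends extEnd f w fun e => combine ξ ψe e.1
  calc Zfun (Xhat X) (dEnds ends) (dExtEnd extEnd) (dualF X ends extEnd f) ψe
      -- `Zfun` sums with a classical `DecidableEq (Ei ⊕ Ei)`; `congr!` switches instances
      = ∑ ξ, g ξ := by unfold Zfun; congr!
    _ = ∑ p, g (e p) := (e.sum_comp g).symm
    _ = _ := by
      rw [Fintype.sum_prod_type]
      refine Fintype.sum_congr _ _ fun χ => ?_
      have hδ : ∀ χ' : ∀ i, AddChar (X (.inl i)) ℂ,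
          ∏ i, dualF X ends extEnd f (.inr i) (fun e' => combine (e (χ, χ')) ψe e'.1)
            = if χ' = fun i => (χ i)⁻¹ then 1 else 0 := fun χ' => by
        change ∏ i, (if χ i * χ' i = 1 then (1 : ℂ) else 0) = _
        simp_rw [Fintype.prod_boole, funext_iff, mul_eq_one_iff_eq_inv']
      simp_rw [g, Fintype.prod_sum_type, hδ, mul_ite, mul_one, mul_zero, sum_ite_eq',
        if_pos (mem_univ _)]
      rfl

lemma prod_charAt_halfEdgeChars [Fintype V] [Fintype Ei] [Fintype Ee]
    (hne : ∀ i, (ends i).1 ≠ (ends i).2) (χ : ∀ i, AddChar (X (.inl i)) ℂ)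
    (ψe : ∀ j, AddChar (X (.inr j)) ℂ) (x : ∀ v, LocalConfig X ends extEnd v) :
    ∏ v, ∏ e, charAt X ends extEnd v (fun e' => combine (halfEdgeChars χ) ψe e'.1) e (x v e)
      = (∏ i, χ i (x (ends i).1 ⟨.inl i, Or.inl rfl⟩
            - x (ends i).2 ⟨.inl i, Or.inr rfl⟩))
        * ∏ j, ψe j (x (extEnd j) ⟨.inr j, rfl⟩) := by
  rw [prod_prod_incident ends extEnd hne]
  congr 1
  refine Fintype.prod_congr _ _ fun i => ?_
  have h₁ : charAt X ends extEnd (ends i).1 (fun e' => combine (halfEdgeChars χ) ψe e'.1)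
      ⟨.inl i, Or.inl rfl⟩ = χ i := by
    simp only [charAt]
    rfl
  have h₂ : charAt X ends extEnd (ends i).2 (fun e' => combine (halfEdgeChars χ) ψe e'.1)
      ⟨.inl i, Or.inr rfl⟩ = (χ i)⁻¹ := by
    simp only [charAt, dif_neg (hne i)]
    rfl
  rw [h₁, h₂, AddChar.inv_apply, ← AddChar.map_add_eq_mul, ← sub_eq_add_neg]

lemma sum_prod_dualF_halfEdgeChars [Fintype V] [Fintype Ei] [Fintype Ee] [∀ e, Fintype (X e)]
    (hne : ∀ i, (ends i).1 ≠ (ends i).2) (f : ∀ v, LocalConfig X ends extEnd v → ℂ)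
    (ψe : ∀ j, AddChar (X (.inr j)) ℂ) :
    ∑ χ : ∀ i, AddChar (X (.inl i)) ℂ, ∏ v,
        dualF X ends extEnd f (.inl v) (fun e => combine (halfEdgeChars χ) ψe e.1)
      = (∏ i, (Fintype.card (X (.inl i)) : ℂ)) * ∑ x : ∀ v, LocalConfig X ends extEnd v,
          if IsConsistent ends extEnd x
          then (∏ v, f v (x v)) * ∏ j, ψe j (x (extEnd j) ⟨.inr j, rfl⟩) else 0 := by
  simp only [dualF]
  simp_rw [prod_univ_sum, Fintype.piFinset_univ]
  rw [sum_comm, mul_sum]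
  refine Fintype.sum_congr _ _ fun x => ?_
  simp_rw [prod_mul_distrib, ← mul_sum, prod_charAt_halfEdgeChars ends extEnd hne, ← sum_mul,
    AddChar.sum_pi_prod_apply_eq_ite]
  have hconsistent : ((fun i => x (ends i).1 ⟨.inl i, Or.inl rfl⟩
      - x (ends i).2 ⟨.inl i, Or.inr rfl⟩) = 0) ↔ IsConsistent ends extEnd x := by
    simp [funext_iff, sub_eq_zero, IsConsistent]
  rw [if_congr hconsistent rfl rfl]
  split_ifs <;> ring

theorem Zfun_dual_eq_card_mul_sum [Fintype V] [Fintype Ei] [Fintype Ee] [∀ e, Fintype (X e)]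
    (hne : ∀ i, (ends i).1 ≠ (ends i).2) (f : ∀ v, LocalConfig X ends extEnd v → ℂ)
    (ψe : ∀ j, AddChar (X (.inr j)) ℂ) :
    Zfun (Xhat X) (dEnds ends) (dExtEnd extEnd) (dualF X ends extEnd f) ψe
      = (∏ i, (Fintype.card (X (.inl i)) : ℂ))
          * ∑ xe, Zfun X ends extEnd f xe * AddChar.pi ψe xe := by
  rw [Zfun_dual_eq_sum_halfEdgeChars, sum_prod_dualF_halfEdgeChars ends extEnd hne,
    sum_ite_isConsistent]
  simp only [Zfun, sum_mul]
  rfl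

end DualNFG

/-- **Code Normal Factor Graph Duality Theorem** (Forney's normal graph duality theorem
in NFG form).
Let `G = (V, Ei, Ee, f)` be an NFG all of whose edge alphabets `X e` are finite abelian
groups and all of whose local functions are indicator functions of subgroups
`C v ≤ ∏_{e ∈ E(v)} X e`.  Let `B` be the global behavior (the subgroup of configurations
satisfying all local constraints), `Ccode` its projection onto the external coordinates
(the realized code) and `σ` the number of internal configurations compatible with the zero
external configuration, so that `Z_G = σ · 1_{Ccode}`.  Then the dual NFG `Ĝ` (each local
function replaced by its Fourier transform, a `δ₊` vertex inserted into each internal edge)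
satisfies `Z_Ĝ = |X_{E_int}| · σ · |Ccode| · 1_{Ccode^⊥}`: up to a positive scale factor, `Ĝ`
realizes the indicator function of the dual code. -/
theorem code_nfg_duality_theorem {V Ei Ee : Type}
    [Fintype V] [Fintype Ei] [Fintype Ee]
    (X : Ei ⊕ Ee → Type) [∀ e, AddCommGroup (X e)] [∀ e, Fintype (X e)]
    (ends : Ei → V × V) (hne : ∀ i : Ei, (ends i).1 ≠ (ends i).2)
    (extEnd : Ee → V)
    (f : ∀ v : V, ((e : {e : Ei ⊕ Ee // Inc ends extEnd v e}) → X e.1) → ℂ)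
    (C : ∀ v : V, AddSubgroup ((e : {e : Ei ⊕ Ee // Inc ends extEnd v e}) → X e.1))
    (hf : ∀ v x, f v x = if x ∈ C v then 1 else 0)
    (B : AddSubgroup ((∀ j : Ee, X (.inr j)) × (∀ i : Ei, X (.inl i))))
    (hB : ∀ p : (∀ j : Ee, X (.inr j)) × (∀ i : Ei, X (.inl i)),
      p ∈ B ↔ ∀ v : V, (fun e : {e : Ei ⊕ Ee // Inc ends extEnd v e} =>
          combine p.2 p.1 e.1) ∈ C v)
    (Ccode : AddSubgroup (∀ j : Ee, X (.inr j)))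
    (hCcode : ∀ xe : ∀ j : Ee, X (.inr j),
      xe ∈ Ccode ↔ ∃ xi : ∀ i : Ei, X (.inl i), (xe, xi) ∈ B)
    (σ : ℕ)
    (hσ : σ = Nat.card {xi : ∀ i : Ei, X (.inl i) // ((0, xi) :
        (∀ j : Ee, X (.inr j)) × (∀ i : Ei, X (.inl i))) ∈ B}) :
    (∀ xe : ∀ j : Ee, X (.inr j),
        Zfun X ends extEnd f xe = (σ : ℂ) * (if xe ∈ Ccode then 1 else 0))
      ∧ ∀ ψe : ∀ j : Ee, AddChar (X (.inr j)) ℂ,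
          Zfun (Xhat X) (dEnds ends) (dExtEnd extEnd) (dualF X ends extEnd f) ψe
            = (∏ i : Ei, (Fintype.card (X (.inl i)) : ℂ)) * (σ : ℂ)
                * (Nat.card Ccode : ℂ)
                * (if (∀ c ∈ Ccode, ∏ j : Ee, ψe j (c j) = 1) then 1 else 0) := by
  have hZ : ∀ xe, Zfun X ends extEnd f xe = (σ : ℂ) * (if xe ∈ Ccode then 1 else 0) := by
    subst hσ
    exact Zfun_eq_card_mul_ite hf hB hCcode
  refine ⟨hZ, fun ψe => ?_⟩
  simp_rw [Zfun_dual_eq_card_mul_sum ends extEnd hne, hZ, mul_assoc, ite_mul, one_mul, zero_mul,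
    ← mul_sum, AddChar.sum_ite_mem_eq_ite, AddChar.pi_apply]
  by_cases hdual : ∀ c ∈ Ccode, ∏ j, ψe j (c j) = 1 <;> simp [hdual]
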